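/- arXiv:2201.10428 — 4 statements merged into one kernel-verified Lean document; each statement's English description precedes it below -/
import Mathlib

section
/- For every integer d ≥ 1 and every C > 0 there exists a constant C_Π > 0, depending only on d and C (in particular independent of σ and of f), such that the following holds: for every f : ℝ → ℝ twice differentiable on [0,∞) with f'(0) = 0 and f''(r) ≥ C for all r ≥ 0, for every σ with 0 < σ ≤ 1 and for every R ≥ 2, one has ∫_R^∞ e^{−f(λ)/σ²} λ^{d−1} dλ ≤ C_Π · e^{−C·R} · ∫₀² e^{−f(λ)/σ²} λ^{d−1} dλ. -/
open Real MeasureTheory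
open scoped Nat

/-- directionwise exponential-decrease estimate, uniform in `σ ≤ 1`:
there is `C_Π > 0` depending only on `d` and `C` such that for every `f` twice
differentiable on `[0,∞)` with `f'(0) = 0`, `f'' ≥ C`, every `0 < σ ≤ 1` and `R ≥ 2`,
`∫_R^∞ e^{−f/σ²} λ^{d−1} ≤ C_Π e^{−CR} ∫₀² e^{−f/σ²} λ^{d−1}`. -/
theorem stmt_6 (d : ℕ) (hd : 1 ≤ d) (C : ℝ) (hC : 0 < C) :
    ∃ CPi : ℝ, 0 < CPi ∧
      ∀ f f' f'' : ℝ → ℝ,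
        (∀ r ∈ Set.Ici (0 : ℝ), HasDerivAt f (f' r) r) →
        (∀ r ∈ Set.Ici (0 : ℝ), HasDerivAt f' (f'' r) r) →
        f' 0 = 0 → (∀ r ∈ Set.Ici (0 : ℝ), C ≤ f'' r) →
        ∀ σ : ℝ, 0 < σ → σ ≤ 1 → ∀ R : ℝ, 2 ≤ R →
          (∫ l in Set.Ici R, Real.exp (-f l / σ ^ 2) * l ^ (d - 1)) ≤
            CPi * Real.exp (-C * R) *
              ∫ l in Set.Icc (0 : ℝ) 2, Real.exp (-f l / σ ^ 2) * l ^ (d - 1) := by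
  set n : ℕ := d - 1 with hn
  refine ⟨n ! * Real.exp (4 * C) / C ^ (n + 1), by positivity, ?_⟩
  intro f f' f'' hf hf' hf'0 hf'' σ hσ hσ1 R hR
  have hσ2 : (0:ℝ) < σ ^ 2 := by positivity
  have hσ2' : σ ^ 2 ≤ 1 := by nlinarith
  -- continuity of f and f' on [0, ∞)
  have hfc : ContinuousOn f (Set.Ici 0) := fun x hx =>
    (hf x hx).continuousAt.continuousWithinAt
  have hf'c : ContinuousOn f' (Set.Ici 0) := fun x hx =>
    (hf' x hx).continuousAt.continuousWithinAt
  have hint : interior (Set.Ici (0:ℝ)) = Set.Ioi 0 := interior_Ici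
  -- f' is monotone on [0,∞), hence nonnegative
  have hmono' : MonotoneOn f' (Set.Ici 0) := by
    apply monotoneOn_of_hasDerivWithinAt_nonneg (convex_Ici 0) hf'c
      (f' := f'') (fun x hx => ?_) (fun x hx => ?_)
    · exact (hf' x (by rw [hint] at hx; exact le_of_lt (Set.mem_Ioi.mp hx))).hasDerivWithinAt
    · exact le_trans hC.le (hf'' x (by rw [hint] at hx; exact le_of_lt (Set.mem_Ioi.mp hx)))
  have hf'nn : ∀ r ∈ Set.Ici (0:ℝ), 0 ≤ f' r := fun r hr => by
    have := hmono' (Set.self_mem_Ici) hr hr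
    rwa [hf'0] at this
  -- f is monotone on [0,∞)
  have hmono : MonotoneOn f (Set.Ici 0) := by
    apply monotoneOn_of_hasDerivWithinAt_nonneg (convex_Ici 0) hfc
      (f' := f') (fun x hx => ?_) (fun x hx => ?_)
    · exact (hf x (by rw [hint] at hx; exact le_of_lt (Set.mem_Ioi.mp hx))).hasDerivWithinAt
    · exact hf'nn x (by rw [hint] at hx; exact le_of_lt (Set.mem_Ioi.mp hx))
  -- quadratic growth: f l ≥ f 2 + C/2 * (l^2 - 4) for l ≥ 2
  have hquad : ∀ l : ℝ, 2 ≤ l → f 2 + C / 2 * (l ^ 2 - 4) ≤ f l := by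
    have hg' : ∀ x ∈ Set.Ici (0:ℝ), HasDerivAt (fun y => f' y - C * y) (f'' x - C) x :=
      fun x hx => (hf' x hx).sub (by simpa using (hasDerivAt_id x).const_mul C)
    have hg'c : ContinuousOn (fun y => f' y - C * y) (Set.Ici 0) :=
      hf'c.sub (continuousOn_const.mul continuousOn_id)
    have hmg' : MonotoneOn (fun y => f' y - C * y) (Set.Ici 0) := by
      apply monotoneOn_of_hasDerivWithinAt_nonneg (convex_Ici 0) hg'c
        (f' := fun x => f'' x - C) (fun x hx => ?_) (fun x hx => ?_)
      · exact (hg' x (by rw [hint] at hx; exact le_of_lt (Set.mem_Ioi.mp hx))).hasDerivWithinAt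
      · have := hf'' x (by rw [hint] at hx; exact le_of_lt (Set.mem_Ioi.mp hx))
        show (0:ℝ) ≤ f'' x - C
        linarith
    have hg'nn : ∀ x ∈ Set.Ici (0:ℝ), 0 ≤ f' x - C * x := fun x hx => by
      have := hmg' (Set.self_mem_Ici) hx hx
      simp only [hf'0, mul_zero, sub_zero] at this
      linarith
    have hG : ∀ x ∈ Set.Ici (0:ℝ), HasDerivAt (fun y => f y - C / 2 * y ^ 2)
        (f' x - C * x) x := by
      intro x hx
      have h2 : HasDerivAt (fun y : ℝ => C / 2 * y ^ 2) (C / 2 * (2 * x)) x := by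
        simpa using ((hasDerivAt_pow 2 x).const_mul (C / 2))
      have := (hf x hx).sub h2
      exact this.congr_deriv (by ring)
    have hGc : ContinuousOn (fun y => f y - C / 2 * y ^ 2) (Set.Ici 0) :=
      hfc.sub (continuousOn_const.mul (continuousOn_pow 2))
    have hmG : MonotoneOn (fun y => f y - C / 2 * y ^ 2) (Set.Ici 0) := by
      apply monotoneOn_of_hasDerivWithinAt_nonneg (convex_Ici 0) hGc
        (f' := fun x => f' x - C * x) (fun x hx => ?_) (fun x hx => ?_)
      · exact (hG x (by rw [hint] at hx; exact le_of_lt (Set.mem_Ioi.mp hx))).hasDerivWithinAt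
      · exact hg'nn x (by rw [hint] at hx; exact le_of_lt (Set.mem_Ioi.mp hx))
    intro l hl
    have h02 : (2:ℝ) ∈ Set.Ici (0:ℝ) := by norm_num
    have hl0 : l ∈ Set.Ici (0:ℝ) := by simp only [Set.mem_Ici]; linarith
    have := hmG h02 hl0 hl
    simp only at this
    nlinarith
  set K : ℝ := Real.exp (-f 2 / σ ^ 2) with hK
  have hKpos : 0 < K := Real.exp_pos _
  -- pointwise upper bound on [R, ∞)
  have hpt : ∀ l : ℝ, R ≤ l →
      Real.exp (-f l / σ ^ 2) * l ^ n ≤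
        K * (n ! * Real.exp (4 * C) / C ^ n) * Real.exp (-C * l) := by
    intro l hl
    have hl2 : (2:ℝ) ≤ l := le_trans hR hl
    have hl0 : (0:ℝ) ≤ l := by linarith
    -- exponent bound
    have h1 : -f l / σ ^ 2 ≤ -f 2 / σ ^ 2 - 2 * C * (l - 2) := by
      have hq := hquad l hl2
      have ha : f 2 - f l ≤ -(2 * C * (l - 2)) := by
        nlinarith [mul_nonneg hC.le (sq_nonneg (l - 2))]
      have ha0 : f 2 - f l ≤ 0 := by nlinarith
      have hd2 : (f 2 - f l) / σ ^ 2 ≤ f 2 - f l := by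
        rw [div_le_iff₀ hσ2]; nlinarith
      have hsplit : -f l / σ ^ 2 = -f 2 / σ ^ 2 + (f 2 - f l) / σ ^ 2 := by ring
      rw [hsplit]; linarith
    have hexp1 : Real.exp (-f l / σ ^ 2) ≤ K * Real.exp (-2 * C * (l - 2)) := by
      rw [hK, ← Real.exp_add]
      apply Real.exp_le_exp.mpr
      linarith
    -- polynomial bound
    have hpow : l ^ n ≤ n ! * Real.exp (C * l) / C ^ n := by
      have := Real.pow_div_factorial_le_exp (x := C * l) (by positivity) n
      rw [div_le_iff₀ (by positivity : (0:ℝ) < (n ! : ℝ))] at this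
      rw [le_div_iff₀ (by positivity : (0:ℝ) < C ^ n)]
      calc l ^ n * C ^ n = (C * l) ^ n := by rw [mul_pow]; ring
        _ ≤ Real.exp (C * l) * n ! := this
        _ = n ! * Real.exp (C * l) := by ring
    have hlpnn : (0:ℝ) ≤ l ^ n := by positivity
    calc Real.exp (-f l / σ ^ 2) * l ^ n
        ≤ (K * Real.exp (-2 * C * (l - 2))) * (n ! * Real.exp (C * l) / C ^ n) := by
          apply mul_le_mul hexp1 hpow hlpnn (by positivity)
      _ = K * ((n ! : ℝ) / C ^ n) * (Real.exp (-2 * C * (l - 2)) * Real.exp (C * l)) := by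
          ring
      _ = K * ((n ! : ℝ) / C ^ n) * (Real.exp (4 * C) * Real.exp (-C * l)) := by
          rw [← Real.exp_add, ← Real.exp_add]; ring_nf
      _ = K * (n ! * Real.exp (4 * C) / C ^ n) * Real.exp (-C * l) := by ring
  set M : ℝ := K * (n ! * Real.exp (4 * C) / C ^ n) with hM
  have hMpos : 0 < M := by positivity
  -- integrability of the dominating function
  have hdomInt : IntegrableOn (fun l => M * Real.exp (-C * l)) (Set.Ici R) := by
    rw [integrableOn_Ici_iff_integrableOn_Ioi]
    exact (exp_neg_integrableOn_Ioi R hC).const_mul M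
  have hsub : Set.Ici R ⊆ Set.Ici (0:ℝ) := fun x hx => le_trans (by linarith : (0:ℝ) ≤ R) (Set.mem_Ici.mp hx)
  have hcontI : ContinuousOn (fun l => Real.exp (-f l / σ ^ 2) * l ^ n) (Set.Ici R) := by
    apply ContinuousOn.mul
    · exact Real.continuous_exp.comp_continuousOn ((hfc.mono hsub).neg.div_const _)
    · exact (continuousOn_pow n)
  have hmeas : AEStronglyMeasurable (fun l => Real.exp (-f l / σ ^ 2) * l ^ n)
      (volume.restrict (Set.Ici R)) :=
    hcontI.aestronglyMeasurable measurableSet_Ici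
  have hLHSint : IntegrableOn (fun l => Real.exp (-f l / σ ^ 2) * l ^ n) (Set.Ici R) := by
    apply Integrable.mono' hdomInt hmeas
    filter_upwards [ae_restrict_mem measurableSet_Ici] with x hx
    rw [Real.norm_eq_abs, abs_of_nonneg (mul_nonneg (Real.exp_pos _).le
      (pow_nonneg (le_trans (by linarith : (0:ℝ) ≤ R) hx) n))]
    exact hpt x hx
  have hle1 : (∫ l in Set.Ici R, Real.exp (-f l / σ ^ 2) * l ^ n)
      ≤ ∫ l in Set.Ici R, M * Real.exp (-C * l) :=
    setIntegral_mono_on hLHSint hdomInt measurableSet_Ici (fun x hx => hpt x hx)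
  -- value of the dominating integral
  have hval : (∫ l in Set.Ici R, Real.exp (-C * l)) = Real.exp (-C * R) / C := by
    rw [MeasureTheory.integral_Ici_eq_integral_Ioi]
    have h := integral_comp_mul_left_Ioi (fun u => Real.exp (-u)) R hC
    simp only [smul_eq_mul] at h
    calc (∫ l in Set.Ioi R, Real.exp (-C * l))
        = ∫ l in Set.Ioi R, Real.exp (-(C * l)) := by simp [neg_mul]
      _ = C⁻¹ * ∫ x in Set.Ioi (C * R), Real.exp (-x) := h
      _ = C⁻¹ * Real.exp (-(C * R)) := by rw [integral_exp_neg_Ioi]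
      _ = Real.exp (-C * R) / C := by rw [neg_mul]; ring
  -- lower bound for the integral over [0,2]
  have hsub02 : Set.Icc (0:ℝ) 2 ⊆ Set.Ici (0:ℝ) := fun x hx => hx.1
  have hcont02 : ContinuousOn (fun l => Real.exp (-f l / σ ^ 2) * l ^ n) (Set.Icc 0 2) := by
    apply ContinuousOn.mul
    · exact Real.continuous_exp.comp_continuousOn ((hfc.mono hsub02).neg.div_const _)
    · exact (continuousOn_pow n)
  have hint02 : IntegrableOn (fun l => Real.exp (-f l / σ ^ 2) * l ^ n) (Set.Icc 0 2) :=
    hcont02.integrableOn_compact isCompact_Icc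
  have hge12 : K ≤ ∫ l in Set.Icc (0:ℝ) 2, Real.exp (-f l / σ ^ 2) * l ^ n := by
    have hsub12 : Set.Icc (1:ℝ) 2 ⊆ Set.Icc (0:ℝ) 2 :=
      Set.Icc_subset_Icc (by norm_num) le_rfl
    have hstep1 : (∫ _ in Set.Icc (1:ℝ) 2, K)
        ≤ ∫ l in Set.Icc (1:ℝ) 2, Real.exp (-f l / σ ^ 2) * l ^ n := by
      apply setIntegral_mono_on ((integrableOn_const_iff (C := K)).mpr (Or.inr (by simp)))
        (hint02.mono_set hsub12) measurableSet_Icc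
      intro x hx
      have hx1 : (1:ℝ) ≤ x := hx.1
      have hx2 : x ≤ 2 := hx.2
      have hfx : f x ≤ f 2 := hmono (by simp only [Set.mem_Ici]; linarith)
        (by norm_num) hx2
      have he : K ≤ Real.exp (-f x / σ ^ 2) := by
        rw [hK]
        apply Real.exp_le_exp.mpr
        rw [div_le_div_iff₀ hσ2 hσ2]
        nlinarith
      have hp : (1:ℝ) ≤ x ^ n := one_le_pow₀ hx1
      calc K = K * 1 := (mul_one K).symm
        _ ≤ Real.exp (-f x / σ ^ 2) * x ^ n :=
          mul_le_mul he hp zero_le_one (Real.exp_pos _).le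
    have hstep2 : (∫ l in Set.Icc (1:ℝ) 2, Real.exp (-f l / σ ^ 2) * l ^ n)
        ≤ ∫ l in Set.Icc (0:ℝ) 2, Real.exp (-f l / σ ^ 2) * l ^ n := by
      apply setIntegral_mono_set hint02
      · filter_upwards [ae_restrict_mem measurableSet_Icc] with x hx
        exact mul_nonneg (Real.exp_pos _).le (pow_nonneg hx.1 n)
      · exact HasSubset.Subset.eventuallyLE hsub12
    have hconst : (∫ _ in Set.Icc (1:ℝ) 2, K) = K := by
      rw [setIntegral_const]
      simp [Real.volume_Icc]
      norm_num
    linarith [hstep1, hstep2, hconst ▸ hstep1]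
  -- put everything together
  calc (∫ l in Set.Ici R, Real.exp (-f l / σ ^ 2) * l ^ n)
      ≤ ∫ l in Set.Ici R, M * Real.exp (-C * l) := hle1
    _ = M * (Real.exp (-C * R) / C) := by rw [integral_const_mul, hval]
    _ = n ! * Real.exp (4 * C) / C ^ (n + 1) * Real.exp (-C * R) * K := by
        rw [hM]; field_simp; ring
    _ ≤ n ! * Real.exp (4 * C) / C ^ (n + 1) * Real.exp (-C * R) *
        ∫ l in Set.Icc (0:ℝ) 2, Real.exp (-f l / σ ^ 2) * l ^ n := by
        apply mul_le_mul_of_nonneg_left hge12 (by positivity)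
end

section
/- Let d ≥ 1 and C > 0. Then there exists a constant C_Π > 0 depending only on d and C (independent of σ, U and c) such that: for every differentiable function U : ℝ^d → ℝ that is C-strongly convex, every point c ∈ ℝ^d with ∇U(c) = 0, every σ with 0 < σ ≤ 1, and every R ≥ 2, one has ∫_{{x : |x−c| ≥ R}} e^{−2U(x)/σ²} dx ≤ C_Π · e^{−C·R} · ∫_{{x : |x−c| ≤ 2}} e^{−2U(x)/σ²} dx. -/
open Real MeasureTheory
open Pointwise
set_option maxHeartbeats 1000000

/-- `U : ℝ^d → ℝ` is `m`-strongly convex if `x ↦ U x − (m/2)‖x‖²` is convex on `ℝ^d`. -/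
def IsStronglyConvex {d : ℕ} (m : ℝ) (U : EuclideanSpace ℝ (Fin d) → ℝ) : Prop :=
  ConvexOn ℝ Set.univ (fun x => U x - m / 2 * ‖x‖ ^ 2)

variable {d : ℕ} {C : ℝ} {U : EuclideanSpace ℝ (Fin d) → ℝ} {c : EuclideanSpace ℝ (Fin d)}

lemma convexOn_half_norm_sq (hC : 0 ≤ C) :
    ConvexOn ℝ Set.univ (fun x : EuclideanSpace ℝ (Fin d) => C / 2 * ‖x‖ ^ 2) := by
  refine ⟨convex_univ, fun x _ y _ a b ha hb hab => ?_⟩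
  have h1 : ‖a • x + b • y‖ ≤ a * ‖x‖ + b * ‖y‖ := by
    calc ‖a • x + b • y‖ ≤ ‖a • x‖ + ‖b • y‖ := norm_add_le _ _
    _ = a * ‖x‖ + b * ‖y‖ := by rw [norm_smul, norm_smul, Real.norm_eq_abs, Real.norm_eq_abs,
        abs_of_nonneg ha, abs_of_nonneg hb]
  have h2 : ‖a • x + b • y‖ ^ 2 ≤ (a * ‖x‖ + b * ‖y‖) ^ 2 := by
    apply sq_le_sq' _ h1; nlinarith [norm_nonneg (a • x + b • y)]
  have h3 : (a * ‖x‖ + b * ‖y‖) ^ 2 ≤ a * ‖x‖ ^ 2 + b * ‖y‖ ^ 2 := by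
    nlinarith [sq_nonneg (‖x‖ - ‖y‖), mul_nonneg ha hb]
  simp only [smul_eq_mul]
  nlinarith

lemma convexOn_of_stronglyConvex (hC : 0 ≤ C) (hU : IsStronglyConvex C U) :
    ConvexOn ℝ Set.univ U := by
  have := hU.add (convexOn_half_norm_sq (d := d) hC)
  have heq : ((fun x => U x - C / 2 * ‖x‖ ^ 2) + fun x : EuclideanSpace ℝ (Fin d) => C / 2 * ‖x‖ ^ 2) = U := by
    funext x; simp
  rwa [heq] at this

lemma fderiv_eq_zero_of_gradient_eq_zero (hgrad : gradient U c = 0) :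
    fderiv ℝ U c = 0 := by
  have h : (InnerProductSpace.toDual ℝ _) (gradient U c) = fderiv ℝ U c :=
    (InnerProductSpace.toDual ℝ _).apply_symm_apply _
  rw [hgrad, map_zero] at h
  exact h.symm

lemma quad_lower_bound (hC : 0 ≤ C) (hU : IsStronglyConvex C U) (hdiff : Differentiable ℝ U)
    (hgrad : gradient U c = 0) (y : EuclideanSpace ℝ (Fin d)) :
    U c + C / 2 * ‖y - c‖ ^ 2 ≤ U y := by
  set v := y - c with hv
  -- derivative of s ↦ U (c + s • v) at 0 is 0
  have hline : HasDerivAt (fun s : ℝ => c + s • v) v 0 := by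
    simpa using ((hasDerivAt_id (0:ℝ)).smul_const v).const_add c
  have hU0 : HasFDerivAt U (fderiv ℝ U c) ((fun s : ℝ => c + s • v) 0) := by
    simpa using (hdiff c).hasFDerivAt
  have hfd : HasDerivAt (fun s : ℝ => U (c + s • v)) 0 0 := by
    have := hU0.comp_hasDerivAt 0 hline
    simp [fderiv_eq_zero_of_gradient_eq_zero hgrad] at this
    exact this
  -- slope tends to 0 along 𝓝[>] 0
  have hslope : Filter.Tendsto (fun s : ℝ => (U (c + s • v) - U c) / s)
      (nhdsWithin 0 (Set.Ioi 0)) (nhds 0) := by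
    have h1 := hasDerivAt_iff_tendsto_slope.mp hfd
    have h2 : Filter.Tendsto (slope (fun s : ℝ => U (c + s • v)) 0)
        (nhdsWithin 0 (Set.Ioi 0)) (nhds 0) :=
      h1.mono_left (nhdsWithin_mono 0 (fun x hx => ne_of_gt hx))
    refine h2.congr' ?_
    filter_upwards [self_mem_nhdsWithin] with s hs
    simp [slope_def_field]
  have hIoc : ∀ s : ℝ, s ∈ Set.Ioc (0:ℝ) 1 →
      (U (c + s • v) - U c) / s ≤ (U y - C/2*‖y‖^2) - (U c - C/2*‖c‖^2)
        + C/2*(2*(inner ℝ c v : ℝ) + s*‖v‖^2) := by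
    intro s hs
    obtain ⟨hs0, hs1⟩ := hs
    have hcomb : s • y + (1 - s) • c = c + s • v := by rw [hv]; module
    have hconv := hU.2 (Set.mem_univ y) (Set.mem_univ c) hs0.le (by linarith : (0:ℝ) ≤ 1 - s)
      (by ring)
    rw [hcomb] at hconv
    have hnorm : ‖c + s • v‖ ^ 2 = ‖c‖^2 + 2*s*(inner ℝ c v : ℝ) + s^2*‖v‖^2 := by
      rw [norm_add_sq_real, real_inner_smul_right, norm_smul, Real.norm_eq_abs, mul_pow, sq_abs]
      ring
    rw [div_le_iff₀ hs0]
    simp only [smul_eq_mul] at hconv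
    nlinarith [hnorm]
  have hRcont : Continuous (fun s : ℝ => (U y - C/2*‖y‖^2) - (U c - C/2*‖c‖^2)
      + C/2*(2*(inner ℝ c v : ℝ) + s*‖v‖^2)) := by fun_prop
  have h0le : (0:ℝ) ≤ (U y - C/2*‖y‖^2) - (U c - C/2*‖c‖^2)
      + C/2*(2*(inner ℝ c v : ℝ) + 0*‖v‖^2) := by
    refine le_of_tendsto_of_tendsto hslope ((hRcont.tendsto 0).mono_left nhdsWithin_le_nhds) ?_
    filter_upwards [Ioc_mem_nhdsGT_of_mem ⟨le_refl 0, zero_lt_one⟩] with s hs using hIoc s hs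
  have hy2 : ‖y‖^2 = ‖c‖^2 + 2*(inner ℝ c v : ℝ) + ‖v‖^2 := by
    have hyc : y = c + v := by rw [hv]; abel
    rw [hyc, norm_add_sq_real]
  nlinarith [hy2]

lemma ray_lower_bound (hC : 0 ≤ C) (hU : IsStronglyConvex C U) (z : EuclideanSpace ℝ (Fin d))
    {t : ℝ} (ht : 1 ≤ t) :
    U (c + z) + (t - 1) * (U (c + z) - U c) ≤ U (c + t • z) := by
  have hconvU := convexOn_of_stronglyConvex hC hU
  have ht0 : (0:ℝ) < t := lt_of_lt_of_le one_pos ht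
  have hcomb : (1/t) • (c + t • z) + (1 - 1/t) • c = c + z := by
    have hz : (1/t) • (t • z) = z := by
      rw [smul_smul, one_div, inv_mul_cancel₀ ht0.ne', one_smul]
    rw [smul_add, hz]
    module
  have ha : (0:ℝ) ≤ 1/t := by positivity
  have hb : (0:ℝ) ≤ 1 - 1/t := by
    rw [sub_nonneg, div_le_one ht0]; exact ht
  have hab : 1/t + (1 - 1/t) = 1 := by ring
  have h := hconvU.2 (Set.mem_univ (c + t • z)) (Set.mem_univ c) ha hb hab
  rw [hcomb] at h
  simp only [smul_eq_mul] at h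
  have h2 := mul_le_mul_of_nonneg_left h ht0.le
  have h4 : t * (1/t * U (c + t • z) + (1 - 1/t) * U c)
      = U (c + t • z) + (t - 1) * U c := by
    field_simp
  rw [h4] at h2
  nlinarith [h2]

lemma scale_step {d : ℕ} (f : EuclideanSpace ℝ (Fin d) → ℝ) (c : EuclideanSpace ℝ (Fin d))
    {t : ℝ} (ht : 0 < t) :
    ∫ x in {x : EuclideanSpace ℝ (Fin d) | 3/2*t ≤ ‖x - c‖ ∧ ‖x - c‖ ≤ 2*t}, f x
      = t^d * ∫ z in {z : EuclideanSpace ℝ (Fin d) | 3/2 ≤ ‖z‖ ∧ ‖z‖ ≤ 2}, f (c + t • z) := by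
  have h1 : MeasurePreserving (fun x : EuclideanSpace ℝ (Fin d) => c + x) volume volume :=
    measurePreserving_add_left volume c
  have hemb : MeasurableEmbedding (fun x : EuclideanSpace ℝ (Fin d) => c + x) :=
    (MeasurableEquiv.addLeft c).measurableEmbedding
  have h2 := h1.setIntegral_preimage_emb hemb f
    {x : EuclideanSpace ℝ (Fin d) | 3/2*t ≤ ‖x - c‖ ∧ ‖x - c‖ ≤ 2*t}
  have hpre : (fun x : EuclideanSpace ℝ (Fin d) => c + x)⁻¹'
      {x | 3/2*t ≤ ‖x - c‖ ∧ ‖x - c‖ ≤ 2*t}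
      = {x : EuclideanSpace ℝ (Fin d) | 3/2*t ≤ ‖x‖ ∧ ‖x‖ ≤ 2*t} := by
    ext x; simp [Set.mem_setOf_eq]
  have hsmul : t • {z : EuclideanSpace ℝ (Fin d) | 3/2 ≤ ‖z‖ ∧ ‖z‖ ≤ 2}
      = {x : EuclideanSpace ℝ (Fin d) | 3/2*t ≤ ‖x‖ ∧ ‖x‖ ≤ 2*t} := by
    ext x
    rw [Set.mem_smul_set_iff_inv_smul_mem₀ ht.ne']
    simp only [Set.mem_setOf_eq, norm_smul, norm_inv, Real.norm_eq_abs, abs_of_pos ht]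
    rw [inv_mul_eq_div, le_div_iff₀ ht, div_le_iff₀ ht]
  have h3 := MeasureTheory.Measure.setIntegral_comp_smul_of_pos (μ := volume)
    (fun x => f (c + x)) {z : EuclideanSpace ℝ (Fin d) | 3/2 ≤ ‖z‖ ∧ ‖z‖ ≤ 2} ht
  rw [finrank_euclideanSpace_fin, hsmul] at h3
  calc ∫ x in {x : EuclideanSpace ℝ (Fin d) | 3/2*t ≤ ‖x - c‖ ∧ ‖x - c‖ ≤ 2*t}, f x
      = ∫ x in {x : EuclideanSpace ℝ (Fin d) | 3/2*t ≤ ‖x‖ ∧ ‖x‖ ≤ 2*t}, f (c + x) := by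
        rw [← h2, hpre]
    _ = t^d * ∫ z in {z : EuclideanSpace ℝ (Fin d) | 3/2 ≤ ‖z‖ ∧ ‖z‖ ≤ 2}, f (c + t • z) := by
        rw [h3, smul_eq_mul, ← mul_assoc, mul_inv_cancel₀ (pow_ne_zero _ ht.ne'), one_mul]

lemma integrable_gibbs {d : ℕ} {C : ℝ} {U : EuclideanSpace ℝ (Fin d) → ℝ}
    {c : EuclideanSpace ℝ (Fin d)} (hC : 0 < C) (hU : IsStronglyConvex C U)
    (hdiff : Differentiable ℝ U) (hgrad : gradient U c = 0) {σ : ℝ} (hσ : 0 < σ) :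
    Integrable (fun x => rexp (-2 * U x / σ^2)) := by
  have hb : (0:ℝ) < C / σ^2 := by positivity
  obtain ⟨b, hbdef⟩ : ∃ b : ℝ, b = C/σ^2 := ⟨_, rfl⟩
  rw [← hbdef] at hb
  have hgauss : Integrable (fun v : EuclideanSpace ℝ (Fin d) => rexp (-b * ‖v‖^2)) := by
    have hint := (GaussianFourier.integrable_cexp_neg_mul_sq_norm_add
      (b := (b : ℂ)) (by simpa using hb) 0 (0 : EuclideanSpace ℝ (Fin d))).norm
    refine hint.congr (Filter.Eventually.of_forall fun v => ?_)
    simp only [Complex.norm_exp]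
    norm_num
    left
    norm_cast
  have hgauss' := hgauss.comp_sub_right c
  have hcont : Continuous (fun x => rexp (-2 * U x / σ^2)) := by
    exact Real.continuous_exp.comp (by have hUc := hdiff.continuous; fun_prop (disch := positivity))
  refine ((hgauss'.const_mul (rexp (-2 * U c / σ^2))).mono hcont.aestronglyMeasurable
    (Filter.Eventually.of_forall fun x => ?_))
  have hq := quad_lower_bound hC.le hU hdiff hgrad x
  rw [Real.norm_eq_abs, Real.norm_eq_abs, abs_of_nonneg (Real.exp_pos _).le,
    abs_of_nonneg (by positivity)]
  rw [← Real.exp_add]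
  apply Real.exp_le_exp.mpr
  have hσ2 : (0:ℝ) < σ^2 := by positivity
  have h5 : -2*U x ≤ -2*U c - C*‖x-c‖^2 := by nlinarith [hq]
  calc -2*U x/σ^2 ≤ (-2*U c - C*‖x-c‖^2)/σ^2 := (div_le_div_iff_of_pos_right hσ2).mpr h5
    _ = -2*U c/σ^2 + -b * ‖x-c‖^2 := by rw [hbdef]; ring



/-- there is `C_Π > 0` depending only on `d`, `C` such that for every
differentiable `C`-strongly convex `U` with `∇U(c) = 0`, every `0 < σ ≤ 1` and `R ≥ 2`,
`∫_{|x−c|≥R} e^{−2U/σ²} ≤ C_Π e^{−CR} ∫_{|x−c|≤2} e^{−2U/σ²}`. -/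
theorem stmt_7 (d : ℕ) (hd : 1 ≤ d) (C : ℝ) (hC : 0 < C) :
    ∃ CPi : ℝ, 0 < CPi ∧
      ∀ U : EuclideanSpace ℝ (Fin d) → ℝ, Differentiable ℝ U → IsStronglyConvex C U →
        ∀ c : EuclideanSpace ℝ (Fin d), gradient U c = 0 →
          ∀ σ : ℝ, 0 < σ → σ ≤ 1 → ∀ R : ℝ, 2 ≤ R →
            (∫ x in {x : EuclideanSpace ℝ (Fin d) | R ≤ ‖x - c‖},
                Real.exp (-2 * U x / σ ^ 2)) ≤
              CPi * Real.exp (-C * R) *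
                ∫ x in {x : EuclideanSpace ℝ (Fin d) | ‖x - c‖ ≤ 2},
                  Real.exp (-2 * U x / σ ^ 2) := by
  classical
  have hq1 : rexp (-C/6) < 1 := by
    apply Real.exp_lt_one_iff.mpr; linarith
  have hq0 : (0:ℝ) ≤ rexp (-C/6) := (Real.exp_pos _).le
  refine ⟨(d.factorial : ℝ) * (8/(3*C))^d * rexp (9*C/4) * (1 - rexp (-C/6))⁻¹, ?_, ?_⟩
  · have h1 : (0:ℝ) < 1 - rexp (-C/6) := by linarith
    positivity
  intro U hdiff hU c hgrad σ hσ hσ1 R hR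
  set f : EuclideanSpace ℝ (Fin d) → ℝ := fun x => rexp (-2 * U x / σ ^ 2) with hfdef
  have hint : Integrable f := integrable_gibbs hC hU hdiff hgrad hσ
  have hfnn : ∀ x, 0 ≤ f x := fun x => (Real.exp_pos _).le
  have hfcont : Continuous f :=
    Real.continuous_exp.comp (by have hUc := hdiff.continuous; fun_prop (disch := positivity))
  have hballmeas : MeasurableSet {x : EuclideanSpace ℝ (Fin d) | ‖x - c‖ ≤ 2} :=
    (isClosed_le ((continuous_id.sub continuous_const).norm) continuous_const).measurableSet
  set D : ℝ := ∫ x in {x : EuclideanSpace ℝ (Fin d) | ‖x - c‖ ≤ 2}, f x with hDdef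
  have hD0 : 0 ≤ D := setIntegral_nonneg hballmeas fun x _ => hfnn x
  have hσ2 : (0:ℝ) < σ^2 := by positivity
  have hσ21 : σ^2 ≤ 1 := by nlinarith
  -- annulus bound
  have hann : ∀ t : ℝ, 1 ≤ t →
      (∫ x in {x : EuclideanSpace ℝ (Fin d) | 3/2*t ≤ ‖x - c‖ ∧ ‖x - c‖ ≤ 2*t}, f x)
        ≤ t^d * rexp (-(9*C/4)*(t-1)) * D := by
    intro t ht
    have ht0 : (0:ℝ) < t := lt_of_lt_of_le one_pos ht
    rw [scale_step f c ht0]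
    set S1 : Set (EuclideanSpace ℝ (Fin d)) := {z | 3/2 ≤ ‖z‖ ∧ ‖z‖ ≤ 2} with hS1def
    have hclosed : IsClosed S1 :=
      (isClosed_le continuous_const continuous_norm).inter
        (isClosed_le continuous_norm continuous_const)
    have hcomp : IsCompact S1 := by
      refine (isCompact_closedBall (0 : EuclideanSpace ℝ (Fin d)) 2).of_isClosed_subset hclosed
        fun z hz => ?_
      simpa [Metric.mem_closedBall, dist_zero_right] using hz.2
    have hmono : ∀ z ∈ S1, f (c + t • z) ≤ rexp (-(9*C/4)*(t-1)) * f (c + z) := by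
      intro z hz
      obtain ⟨hz1, hz2⟩ := hz
      have hrq := quad_lower_bound hC.le hU hdiff hgrad (c + z)
      simp only [add_sub_cancel_left] at hrq
      have hzsq : (3/2:ℝ)^2 ≤ ‖z‖^2 := by nlinarith [norm_nonneg z]
      have hDel : 9*C/8 ≤ U (c+z) - U c := by nlinarith
      have hray := ray_lower_bound (c := c) hC.le hU z ht
      rw [hfdef, ← Real.exp_add]
      apply Real.exp_le_exp.mpr
      have h1 : -2*U (c + t • z) ≤ -2*U (c+z) - 2*(t-1)*(U (c+z) - U c) := by nlinarith
      have h2 : -2*U (c + t • z)/σ^2 ≤ (-2*U (c+z) - 2*(t-1)*(U (c+z) - U c))/σ^2 :=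
        (div_le_div_iff_of_pos_right hσ2).mpr h1
      have h4 : (9*C/4)*(t-1) ≤ 2*(t-1)*(U (c+z) - U c)/σ^2 := by
        have ha : (0:ℝ) ≤ 2*(t-1)*(U (c+z) - U c) := by nlinarith
        have hnum : (9*C/4)*(t-1) ≤ 2*(t-1)*(U (c+z) - U c) := by nlinarith
        have hden : 2*(t-1)*(U (c+z) - U c) ≤ 2*(t-1)*(U (c+z) - U c)/σ^2 := by
          rw [le_div_iff₀ hσ2]; nlinarith
        linarith
      have h5 : (-2*U (c+z) - 2*(t-1)*(U (c+z) - U c))/σ^2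
          = -2*U (c+z)/σ^2 - 2*(t-1)*(U (c+z) - U c)/σ^2 := by ring
      linarith [h2, h4, h5.le, h5.ge]
    have hi1 : IntegrableOn (fun z => f (c + t • z)) S1 :=
      (hfcont.comp (continuous_const.add (continuous_id.const_smul t))).continuousOn.integrableOn_compact hcomp
    have hi2 : IntegrableOn (fun z => rexp (-(9*C/4)*(t-1)) * f (c + z)) S1 :=
      (continuous_const.mul (hfcont.comp (continuous_const.add continuous_id))).continuousOn.integrableOn_compact hcomp
    have hstep1 : (∫ z in S1, f (c + t • z)) ≤ ∫ z in S1, rexp (-(9*C/4)*(t-1)) * f (c + z) :=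
      setIntegral_mono_on hi1 hi2 hclosed.measurableSet hmono
    have hstep2 : (∫ z in S1, rexp (-(9*C/4)*(t-1)) * f (c + z))
        = rexp (-(9*C/4)*(t-1)) * ∫ z in S1, f (c + z) := integral_const_mul _ _
    have hstep3 : (∫ z in S1, f (c + z)) ≤ D := by
      have hone := scale_step f c one_pos
      simp only [one_smul, pow_one, one_pow, one_mul, mul_one] at hone
      rw [← hone]
      refine setIntegral_mono_set hint.integrableOn
        (Filter.Eventually.of_forall fun x => hfnn x)
        (Filter.Eventually.of_forall fun x hx => ?_)
      exact hx.2
    have hnn : (0:ℝ) ≤ t^d := by positivity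
    calc t^d * ∫ z in S1, f (c + t • z)
        ≤ t^d * (rexp (-(9*C/4)*(t-1)) * D) := by
          refine mul_le_mul_of_nonneg_left ?_ hnn
          refine le_trans hstep1 ?_
          rw [hstep2]
          exact mul_le_mul_of_nonneg_left hstep3 (Real.exp_pos _).le
      _ = t^d * rexp (-(9*C/4)*(t-1)) * D := by ring
  -- covering by annuli
  have hR0 : (0:ℝ) < R := by linarith
  have hpow_mono : ∀ i j : ℕ, i ≤ j → R*(4/3:ℝ)^i ≤ R*(4/3)^j := by
    intro i j h
    have h2 := pow_le_pow_right₀ (by norm_num : (1:ℝ) ≤ 4/3) h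
    nlinarith
  have hnormc : Measurable fun x : EuclideanSpace ℝ (Fin d) => ‖x - c‖ :=
    ((continuous_id.sub continuous_const).norm).measurable
  have hEmeas : ∀ k : ℕ, MeasurableSet
      {x : EuclideanSpace ℝ (Fin d) | R*(4/3)^k ≤ ‖x - c‖ ∧ ‖x - c‖ < R*(4/3)^(k+1)} := by
    intro k
    exact (measurableSet_le measurable_const hnormc).inter (measurableSet_lt hnormc measurable_const)
  have hcover : {x : EuclideanSpace ℝ (Fin d) | R ≤ ‖x - c‖}
      = ⋃ k : ℕ, {x : EuclideanSpace ℝ (Fin d) | R*(4/3)^k ≤ ‖x - c‖ ∧ ‖x - c‖ < R*(4/3)^(k+1)} := by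
    ext x
    simp only [Set.mem_setOf_eq, Set.mem_iUnion]
    constructor
    · intro hx
      have hex : ∃ n : ℕ, ‖x - c‖ < R*(4/3)^n := by
        obtain ⟨n, hn⟩ := pow_unbounded_of_one_lt (‖x - c‖/R) (by norm_num : (1:ℝ) < 4/3)
        exact ⟨n, by rw [mul_comm]; exact (div_lt_iff₀ hR0).mp hn⟩
      have hk0 := Nat.find_spec hex
      rcases Nat.eq_zero_or_pos (Nat.find hex) with h0 | hpos
      · exfalso
        rw [h0] at hk0
        simp only [pow_zero, mul_one] at hk0
        linarith
      · refine ⟨Nat.find hex - 1, ?_, ?_⟩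
        · have hmin := Nat.find_min hex (Nat.sub_lt hpos one_pos)
          push_neg at hmin
          exact hmin
        · have hpp : Nat.find hex - 1 + 1 = Nat.find hex := by omega
          rw [hpp]
          exact hk0
    · rintro ⟨k, hk1, hk2⟩
      calc R = R*(4/3:ℝ)^0 := by norm_num
        _ ≤ R*(4/3)^k := hpow_mono 0 k (Nat.zero_le k)
        _ ≤ ‖x - c‖ := hk1
  have hdkey : ∀ i j : ℕ, i < j → Disjoint
      {x : EuclideanSpace ℝ (Fin d) | R*(4/3)^i ≤ ‖x - c‖ ∧ ‖x - c‖ < R*(4/3)^(i+1)}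
      {x : EuclideanSpace ℝ (Fin d) | R*(4/3)^j ≤ ‖x - c‖ ∧ ‖x - c‖ < R*(4/3)^(j+1)} := by
    intro i j hij
    refine Set.disjoint_left.mpr fun x hxi hxj => ?_
    have h1 := hxi.2
    have h2 := hxj.1
    have h3 := hpow_mono (i+1) j hij
    linarith
  have hdisj : Pairwise (Function.onFun Disjoint
      (fun k : ℕ => {x : EuclideanSpace ℝ (Fin d) | R*(4/3)^k ≤ ‖x - c‖ ∧ ‖x - c‖ < R*(4/3)^(k+1)})) := by
    intro i j hij
    rcases lt_or_gt_of_ne hij with h | h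
    · exact hdkey i j h
    · exact (hdkey j i h).symm
  rw [hcover, integral_iUnion hEmeas hdisj hint.integrableOn]
  set q : ℝ := rexp (-C/6) with hqdef
  set A : ℝ := (d.factorial : ℝ) * (8/(3*C))^d * rexp (9*C/4) * rexp (-C*R) with hAdef
  have hterm : ∀ k : ℕ,
      (∫ x in {x : EuclideanSpace ℝ (Fin d) | R*(4/3)^k ≤ ‖x - c‖ ∧ ‖x - c‖ < R*(4/3)^(k+1)}, f x)
        ≤ A * q^k * D := by
    intro k
    set t : ℝ := 2*R/3*(4/3)^k with htdef
    have h43 : (1:ℝ) ≤ (4/3:ℝ)^k := one_le_pow₀ (by norm_num)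
    have ht43 : (4:ℝ)/3 ≤ t := by rw [htdef]; nlinarith
    have ht1 : (1:ℝ) ≤ t := by linarith
    have hsub : {x : EuclideanSpace ℝ (Fin d) | R*(4/3)^k ≤ ‖x - c‖ ∧ ‖x - c‖ < R*(4/3)^(k+1)}
        ⊆ {x : EuclideanSpace ℝ (Fin d) | 3/2*t ≤ ‖x - c‖ ∧ ‖x - c‖ ≤ 2*t} := by
      intro x hx
      obtain ⟨h1, h2⟩ := hx
      have he1 : 3/2*t = R*(4/3:ℝ)^k := by rw [htdef]; ring
      have he2 : 2*t = R*(4/3:ℝ)^(k+1) := by rw [htdef, pow_succ]; ring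
      exact ⟨by rw [he1]; exact h1, by rw [he2]; exact h2.le⟩
    have hstepA : (∫ x in {x : EuclideanSpace ℝ (Fin d) | R*(4/3)^k ≤ ‖x - c‖ ∧ ‖x - c‖ < R*(4/3)^(k+1)}, f x)
        ≤ ∫ x in {x : EuclideanSpace ℝ (Fin d) | 3/2*t ≤ ‖x - c‖ ∧ ‖x - c‖ ≤ 2*t}, f x :=
      setIntegral_mono_set hint.integrableOn
        (Filter.Eventually.of_forall fun x => hfnn x)
        (HasSubset.Subset.eventuallyLE hsub)
    refine le_trans (le_trans hstepA (hann t ht1)) ?_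
    have hcoef : t^d * rexp (-(9*C/4)*(t-1)) ≤ A * q^k := by
      have hRle : R ≤ 3/2*t := by rw [htdef]; nlinarith
      have hbern : 1 + (k:ℝ)*(1/3) ≤ (4/3:ℝ)^k := by
        have hb := one_add_mul_le_pow (by norm_num : (-2:ℝ) ≤ 1/3) k
        have he : ((1:ℝ) + 1/3) = 4/3 := by norm_num
        rw [he] at hb
        exact hb
      have hk49 : 4/9*(k:ℝ) ≤ t := by
        have hmm : (4/3:ℝ)*(1 + (k:ℝ)*(1/3)) ≤ (2*R/3)*(4/3)^k := by
          refine mul_le_mul (by linarith) hbern (by positivity) (by linarith)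
        rw [htdef]; nlinarith
      have hpowb : t^d * rexp (-(3*C/8)*t) ≤ (d.factorial : ℝ) * (8/(3*C))^d := by
        have h := Real.pow_div_factorial_le_exp (3*C/8*t) (by positivity) d
        rw [div_le_iff₀ (by positivity : (0:ℝ) < (d.factorial:ℝ))] at h
        have h3C : (3:ℝ)*C ≠ 0 := by positivity
        have hid : t^d = (8/(3*C))^d * (3*C/8*t)^d := by
          rw [← mul_pow]
          congr 1
          field_simp
        rw [hid]
        calc (8/(3*C))^d * (3*C/8*t)^d * rexp (-(3*C/8)*t)
            ≤ (8/(3*C))^d * (rexp (3*C/8*t) * (d.factorial:ℝ)) * rexp (-(3*C/8)*t) := by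
              exact mul_le_mul_of_nonneg_right
                (mul_le_mul_of_nonneg_left h (by positivity)) (Real.exp_pos _).le
          _ = (d.factorial : ℝ) * (8/(3*C))^d * (rexp (3*C/8*t) * rexp (-(3*C/8)*t)) := by ring
          _ = (d.factorial : ℝ) * (8/(3*C))^d := by
              rw [← Real.exp_add, show 3*C/8*t + -(3*C/8)*t = 0 by ring, Real.exp_zero, mul_one]
      have he1 : rexp (-(3*C/2)*t) ≤ rexp (-C*R) := Real.exp_le_exp.mpr (by nlinarith)
      have he2 : rexp (-(3*C/8)*t) ≤ q^k := by
        have hqk : q^k = rexp ((k:ℝ)*(-C/6)) := by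
          rw [Real.exp_nat_mul]
        rw [hqk]
        exact Real.exp_le_exp.mpr (by nlinarith)
      have hsplit : rexp (-(9*C/4)*(t-1))
          = rexp (9*C/4) * (rexp (-(3*C/2)*t) * (rexp (-(3*C/8)*t) * rexp (-(3*C/8)*t))) := by
        rw [← Real.exp_add, ← Real.exp_add, ← Real.exp_add]
        congr 1
        ring
      calc t^d * rexp (-(9*C/4)*(t-1))
          = rexp (9*C/4) * (t^d * rexp (-(3*C/8)*t)) * rexp (-(3*C/2)*t) * rexp (-(3*C/8)*t) := by
            rw [hsplit]; ring
        _ ≤ rexp (9*C/4) * ((d.factorial:ℝ) * (8/(3*C))^d) * rexp (-C*R) * q^k := by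
            have hp1 : (0:ℝ) ≤ rexp (9*C/4) := (Real.exp_pos _).le
            have hp3 : (0:ℝ) ≤ rexp (-(3*C/2)*t) := (Real.exp_pos _).le
            have hp4 : (0:ℝ) ≤ rexp (-(3*C/8)*t) := (Real.exp_pos _).le
            have hL1 : rexp (9*C/4) * (t^d * rexp (-(3*C/8)*t))
                ≤ rexp (9*C/4) * ((d.factorial:ℝ) * (8/(3*C))^d) :=
              mul_le_mul_of_nonneg_left hpowb hp1
            have hL2 : rexp (9*C/4) * (t^d * rexp (-(3*C/8)*t)) * rexp (-(3*C/2)*t)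
                ≤ rexp (9*C/4) * ((d.factorial:ℝ) * (8/(3*C))^d) * rexp (-C*R) :=
              mul_le_mul hL1 he1 hp3 (by positivity)
            exact mul_le_mul hL2 he2 hp4 (by positivity)
        _ = A * q^k := by rw [hAdef]; ring
    calc t^d * rexp (-(9*C/4)*(t-1)) * D
        ≤ (A * q^k) * D := mul_le_mul_of_nonneg_right hcoef hD0
      _ = A * q^k * D := by ring
  have hsum_geo : Summable fun k : ℕ => A * q^k * D :=
    ((summable_geometric_of_lt_one hq0 hq1).mul_left A).mul_right D
  have hsumL : Summable fun k : ℕ =>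
      ∫ x in {x : EuclideanSpace ℝ (Fin d) | R*(4/3)^k ≤ ‖x - c‖ ∧ ‖x - c‖ < R*(4/3)^(k+1)}, f x :=
    Summable.of_nonneg_of_le (fun k => setIntegral_nonneg (hEmeas k) fun x _ => hfnn x)
      hterm hsum_geo
  calc (∑' k : ℕ, ∫ x in {x : EuclideanSpace ℝ (Fin d) | R*(4/3)^k ≤ ‖x - c‖ ∧ ‖x - c‖ < R*(4/3)^(k+1)}, f x)
      ≤ ∑' k : ℕ, A * q^k * D := Summable.tsum_le_tsum hterm hsumL hsum_geo
    _ = (A*D) * ∑' k : ℕ, q^k := by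
        rw [← tsum_mul_left]
        exact tsum_congr fun k => by ring
    _ = (A*D) * (1-q)⁻¹ := by rw [tsum_geometric_of_lt_one hq0 hq1]
    _ = (d.factorial : ℝ) * (8/(3*C))^d * rexp (9*C/4) * (1 - q)⁻¹ * rexp (-C*R) * D := by
        rw [hAdef]; ring
end

section
/- Let d ≥ 1 and C > 0. There exists a constant C_Π > 0 depending only on d and C (independent of σ, U and c) such that: for every continuous, differentiable, C-strongly convex function U : ℝ^d → ℝ with ∇U(c) = 0 for some c ∈ ℝ^d, and every σ with 0 < σ ≤ 1, the probability measure Π on ℝ^d with density x ↦ e^{−2U(x)/σ²} / Z with respect to Lebesgue measure, where Z = ∫_{ℝ^d} e^{−2U(x)/σ²} dx ∈ (0,∞), satisfies Π({x : |x − c| > R}) ≤ C_Π · e^{−C·R} for every R > 0. -/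
open Real MeasureTheory

set_option maxHeartbeats 1000000
open Real MeasureTheory Set

variable {d : ℕ}
local notation "E" => EuclideanSpace ℝ (Fin d)

lemma convexOn_half_normsq (C : ℝ) (hC : 0 ≤ C) :
    ConvexOn ℝ Set.univ (fun x : E => C / 2 * ‖x‖ ^ 2) := by
  refine ⟨convex_univ, fun x _ y _ a b ha hb hab => ?_⟩
  have h1 : ‖a • x + b • y‖ ≤ a * ‖x‖ + b * ‖y‖ := by
    refine (norm_add_le _ _).trans ?_
    rw [norm_smul, norm_smul, Real.norm_eq_abs, Real.norm_eq_abs,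
      abs_of_nonneg ha, abs_of_nonneg hb]
  have h2 : ‖a • x + b • y‖ ^ 2 ≤ (a * ‖x‖ + b * ‖y‖) ^ 2 :=
    pow_le_pow_left₀ (norm_nonneg _) h1 2
  have h3 : (a * ‖x‖ + b * ‖y‖) ^ 2 ≤ a * ‖x‖ ^ 2 + b * ‖y‖ ^ 2 := by
    nlinarith [mul_nonneg ha hb, sq_nonneg (‖x‖ - ‖y‖)]
  simp only [smul_eq_mul]
  nlinarith [h2.trans h3]

lemma gauss_integrable (b : ℝ) (hb : 0 < b) :
    Integrable (fun v : E => Real.exp (-b * ‖v‖ ^ 2)) := by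
  have h := (GaussianFourier.integrable_cexp_neg_mul_sq_norm_add_of_euclideanSpace
    (b := (b : ℂ)) (by simpa using hb) 0 (0 : E)).norm
  refine h.congr (Filter.Eventually.of_forall fun v => ?_)
  simp only [Complex.norm_exp]
  norm_num
  left
  rw [← Complex.ofReal_pow]
  exact Complex.ofReal_re _

lemma strong_midpoint {C : ℝ} {U : E → ℝ}
    (h : ConvexOn ℝ Set.univ (fun x : E => U x - C / 2 * ‖x‖ ^ 2)) (c z : E) :
    2 * U (c + z) + C * ‖z‖ ^ 2 ≤ U (c + (2:ℝ) • z) + U c := by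
  have key := h.2 (Set.mem_univ (c + (2:ℝ) • z)) (Set.mem_univ c)
    (by norm_num : (0:ℝ) ≤ 1/2) (by norm_num : (0:ℝ) ≤ 1/2) (by norm_num)
  have hmid : (1/2 : ℝ) • (c + (2:ℝ) • z) + (1/2 : ℝ) • c = c + z := by module
  rw [hmid] at key
  have e1 : ‖c + (2:ℝ) • z‖ ^ 2 = ‖c + z‖ ^ 2 + 2 * inner ℝ (c + z) z + ‖z‖ ^ 2 := by
    have h2z : c + (2:ℝ) • z = (c + z) + z := by module
    rw [h2z]; exact norm_add_sq_real _ _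
  have e2 : ‖c‖ ^ 2 = ‖c + z‖ ^ 2 - 2 * inner ℝ (c + z) z + ‖z‖ ^ 2 := by
    have := norm_sub_sq_real (c + z) z
    rwa [add_sub_cancel_right] at this
  simp only [smul_eq_mul] at key
  rw [e1, e2] at key
  nlinarith [key]

lemma min_at_critical {U : E → ℝ} (hconv : ConvexOn ℝ Set.univ U)
    (hdiff : Differentiable ℝ U) (c : E) (hg : gradient U c = 0) (x : E) : U c ≤ U x := by
  have hgrad : HasGradientAt U (0 : E) c := by
    have := (hdiff c).hasGradientAt
    rwa [hg] at this
  have hfd : HasFDerivAt U (0 : E →L[ℝ] ℝ) c := by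
    have := hasGradientAt_iff_hasFDerivAt.1 hgrad
    simpa using this
  set γ : ℝ →ᵃ[ℝ] E := AffineMap.lineMap c x with hγ
  have hγ0 : γ (0:ℝ) = c := by simp [hγ]
  have hγ1 : γ (1:ℝ) = x := by simp [hγ]
  have hh : ConvexOn ℝ Set.univ (U ∘ γ) := by
    have := hconv.comp_affineMap γ
    simpa using this
  have hderivγ : HasDerivAt (fun t : ℝ => γ t) (x - c) 0 := by
    have heq : (fun t : ℝ => γ t) = fun t : ℝ => t • (x - c) + c := by
      funext t; simp [hγ, AffineMap.lineMap_apply]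
    rw [heq]
    simpa using ((hasDerivAt_id (0:ℝ)).smul_const (x - c)).add_const c
  have hfd' : HasFDerivAt U (0 : E →L[ℝ] ℝ) ((fun t : ℝ => γ t) 0) := by
    simpa [hγ0] using hfd
  have hderiv : HasDerivAt (U ∘ γ) 0 0 := by
    have := hfd'.comp_hasDerivAt 0 hderivγ
    simpa using this
  have hslope := hh.le_slope_of_hasDerivAt (Set.mem_univ 0) (Set.mem_univ 1) one_pos hderiv
  rw [slope_def_field] at hslope
  simp only [Function.comp_apply, hγ0, hγ1] at hslope
  linarith [hslope]


/-- exponential tails of the Gibbs measure `Π(dx) = Z⁻¹ e^{−2U(x)/σ²} dx`,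
uniformly in `0 < σ ≤ 1`: for `U` continuous, differentiable, `C`-strongly convex with
critical point `c`, the normalizing constant `Z` is finite and positive, and
`Π({|x − c| > R}) = Z⁻¹ ∫_{|x−c|>R} e^{−2U/σ²} ≤ C_Π e^{−CR}` for all `R > 0`. -/
theorem stmt_8 (d : ℕ) (hd : 1 ≤ d) (C : ℝ) (hC : 0 < C) :
    ∃ CPi : ℝ, 0 < CPi ∧
      ∀ U : EuclideanSpace ℝ (Fin d) → ℝ, Continuous U → Differentiable ℝ U →
        IsStronglyConvex C U →
        ∀ c : EuclideanSpace ℝ (Fin d), gradient U c = 0 →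
          ∀ σ : ℝ, 0 < σ → σ ≤ 1 →
            Integrable (fun x : EuclideanSpace ℝ (Fin d) =>
              Real.exp (-2 * U x / σ ^ 2)) ∧
            0 < (∫ x : EuclideanSpace ℝ (Fin d), Real.exp (-2 * U x / σ ^ 2)) ∧
            ∀ R : ℝ, 0 < R →
              (∫ x in {x : EuclideanSpace ℝ (Fin d) | R < ‖x - c‖},
                  Real.exp (-2 * U x / σ ^ 2)) /
                (∫ x : EuclideanSpace ℝ (Fin d), Real.exp (-2 * U x / σ ^ 2)) ≤
              CPi * Real.exp (-C * R) := by
  refine ⟨(2:ℝ)^d * Real.exp (2*C), by positivity, ?_⟩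
  intro U hUcont hUdiff hUsc' c hgrad σ hσ hσ1
  have hUsc : ConvexOn ℝ Set.univ (fun x => U x - C / 2 * ‖x‖ ^ 2) := hUsc'
  have hσ2 : (0:ℝ) < σ^2 := by positivity
  have hσ2le : σ^2 ≤ 1 := by nlinarith
  have hUconv : ConvexOn ℝ Set.univ U := by
    have h2 := hUsc.add (convexOn_half_normsq (d := d) C hC.le)
    have heq : ((fun x : EuclideanSpace ℝ (Fin d) => U x - C / 2 * ‖x‖ ^ 2)
        + fun x => C / 2 * ‖x‖ ^ 2) = U := by
      funext x; simp
    rwa [heq] at h2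
  have hmin : ∀ x, U c ≤ U x := min_at_critical hUconv hUdiff c hgrad
  have hgrow : ∀ x, U c + C/4 * ‖x - c‖^2 ≤ U x := by
    intro x
    have h := strong_midpoint hUsc c ((1/2:ℝ) • (x - c))
    have hx : c + (2:ℝ) • ((1/2:ℝ) • (x - c)) = x := by module
    rw [hx] at h
    have hn : ‖(1/2:ℝ) • (x - c)‖^2 = 1/4 * ‖x - c‖^2 := by
      rw [norm_smul]
      norm_num
      ring
    have hm := hmin (c + (1/2:ℝ) • (x - c))
    nlinarith [h, hm]
  set f : EuclideanSpace ℝ (Fin d) → ℝ := fun x => Real.exp (-2 * U x / σ^2) with hf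
  have hfpos : ∀ x, 0 < f x := fun x => Real.exp_pos _
  have hfcont : Continuous f := by
    apply Real.continuous_exp.comp
    exact (continuous_const.mul hUcont).div_const _
  have hfbound : ∀ x, f x ≤ Real.exp (-2 * U c / σ^2) * Real.exp (-(C/2) * ‖x - c‖^2) := by
    intro x
    rw [← Real.exp_add]
    apply Real.exp_le_exp.2
    have h0 : 0 ≤ U x - U c := sub_nonneg.2 (hmin x)
    have h1 : C/4 * ‖x - c‖^2 ≤ U x - U c := by linarith [hgrow x]
    have h2 : 2*(U x - U c) ≤ 2*(U x - U c)/σ^2 := by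
      rw [le_div_iff₀ hσ2]; nlinarith
    have h3 : -2 * U x / σ^2 = -2 * U c / σ^2 - 2*(U x - U c)/σ^2 := by
      field_simp; ring
    linarith
  have hIntTrans0 : Integrable (fun x : EuclideanSpace ℝ (Fin d) =>
      Real.exp (-(C/2) * ‖x - c‖^2)) := by
    have h1 := gauss_integrable (d := d) (C/2) (by positivity)
    have := h1.comp_add_left (-c)
    refine this.congr (Filter.Eventually.of_forall fun x => ?_)
    simp [neg_add_eq_sub]
  have hInt : Integrable f := by
    refine Integrable.mono (hIntTrans0.const_mul (Real.exp (-2 * U c / σ^2)))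
      hfcont.aestronglyMeasurable ?_
    filter_upwards with x
    rw [Real.norm_eq_abs, abs_of_pos (hfpos x), Real.norm_eq_abs, abs_of_pos (by positivity)]
    exact hfbound x
  have hZpos : 0 < ∫ x, f x := by
    rw [integral_pos_iff_support_of_nonneg (fun x => (hfpos x).le) hInt]
    have hsupp : Function.support f = Set.univ := Set.eq_univ_of_forall fun x => (hfpos x).ne'
    rw [hsupp]
    exact isOpen_univ.measure_pos volume ⟨0, trivial⟩
  refine ⟨hInt, hZpos, ?_⟩
  intro R hR
  set Z := ∫ x, f x with hZ
  set S : Set (EuclideanSpace ℝ (Fin d)) := {x | R < ‖x - c‖} with hS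
  have hSmeas : MeasurableSet S :=
    (isOpen_lt continuous_const ((continuous_id.sub continuous_const).norm)).measurableSet
  set G : EuclideanSpace ℝ (Fin d) → ℝ :=
    fun y => Set.indicator {y : EuclideanSpace ℝ (Fin d) | R < ‖y‖}
      (fun y => f (c + y)) y with hG
  have hNum_eq : ∫ x in S, f x = ∫ y, G y := by
    rw [← integral_indicator hSmeas]
    rw [← integral_add_left_eq_self (Set.indicator S f) c]
    refine integral_congr_ae (Filter.Eventually.of_forall fun y => ?_)
    by_cases hy : R < ‖y‖
    · simp [hG, Set.indicator, hS, Set.mem_setOf_eq, add_sub_cancel_left, hy]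
    · simp [hG, Set.indicator, hS, Set.mem_setOf_eq, add_sub_cancel_left, hy]
  have hscale : ∫ y, G y = (2:ℝ)^d * ∫ z, G ((2:ℝ) • z) := by
    rw [MeasureTheory.Measure.integral_comp_smul volume G (2:ℝ)]
    rw [finrank_euclideanSpace_fin]
    rw [abs_of_pos (by positivity)]
    rw [smul_eq_mul]
    rw [← mul_assoc]
    rw [mul_inv_cancel₀ (by positivity)]
    ring
  have hpoint : ∀ z, G ((2:ℝ) • z) ≤ Real.exp (-(C*R^2/2)) * f (c + z) := by
    intro z
    by_cases hz : R < ‖(2:ℝ) • z‖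
    · have hGz : G ((2:ℝ) • z) = f (c + (2:ℝ) • z) :=
        Set.indicator_of_mem (show (2:ℝ) • z ∈ {y : EuclideanSpace ℝ (Fin d) | R < ‖y‖} from hz) _
      rw [hGz]
      have hzn : R/2 < ‖z‖ := by
        rw [norm_smul] at hz
        simp only [Real.norm_eq_abs] at hz
        rw [abs_of_pos (by norm_num : (0:ℝ) < 2)] at hz
        linarith
      have hq : R^2/4 ≤ ‖z‖^2 := by nlinarith [norm_nonneg z]
      have hkey := strong_midpoint hUsc c z
      have hmz := hmin (c + z)
      rw [hf]
      simp only
      rw [← Real.exp_add]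
      apply Real.exp_le_exp.2
      have hnum : -2 * U (c + (2:ℝ) • z) ≤ -2 * U (c + z) - 2*C*‖z‖^2 := by
        linarith [hkey, hmz]
      have hd1 : -2 * U (c + (2:ℝ) • z) / σ^2 ≤ (-2 * U (c + z) - 2*C*‖z‖^2) / σ^2 := by
        gcongr
      have hd2 : (-2 * U (c + z) - 2*C*‖z‖^2) / σ^2
          = -2 * U (c + z) / σ^2 - (2*C*‖z‖^2) / σ^2 := by ring
      have hd3 : 2*C*‖z‖^2 ≤ (2*C*‖z‖^2) / σ^2 := by
        rw [le_div_iff₀ hσ2]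
        have ha : 0 ≤ 2*C*‖z‖^2 := by positivity
        nlinarith [mul_le_mul_of_nonneg_left hσ2le ha]
      have hd4 : C*R^2/2 ≤ 2*C*‖z‖^2 := by nlinarith
      linarith
    · have hGz : G ((2:ℝ) • z) = 0 :=
        Set.indicator_of_notMem (show (2:ℝ) • z ∉ {y : EuclideanSpace ℝ (Fin d) | R < ‖y‖} from hz) _
      rw [hGz]
      positivity
  have hIntTrans : Integrable (fun z => f (c + z)) := hInt.comp_add_left c
  have hGnonneg : ∀ z, 0 ≤ G ((2:ℝ) • z) := fun z =>
    Set.indicator_nonneg (fun y _ => (hfpos _).le) _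
  have hTail : ∫ z, G ((2:ℝ) • z) ≤ Real.exp (-(C*R^2/2)) * Z := by
    have h1 : ∫ z, G ((2:ℝ) • z) ≤ ∫ z, Real.exp (-(C*R^2/2)) * f (c + z) := by
      refine integral_mono_of_nonneg (Filter.Eventually.of_forall hGnonneg)
        (hIntTrans.const_mul _) (Filter.Eventually.of_forall hpoint)
    rw [integral_const_mul] at h1
    rwa [integral_add_left_eq_self (fun x => f x) c] at h1
  have hNum_le : ∫ x in S, f x ≤ (2:ℝ)^d * (Real.exp (-(C*R^2/2)) * Z) := by
    rw [hNum_eq, hscale]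
    have h2d : (0:ℝ) < (2:ℝ)^d := by positivity
    exact mul_le_mul_of_nonneg_left hTail h2d.le
  have hNum_le_Z : ∫ x in S, f x ≤ Z :=
    setIntegral_le_integral hInt (Filter.Eventually.of_forall fun x => (hfpos x).le)
  rw [div_le_iff₀ hZpos]
  rcases le_or_gt 2 R with h2R | h2R
  · refine hNum_le.trans ?_
    have hexp : Real.exp (-(C*R^2/2)) ≤ Real.exp (2*C) * Real.exp (-C*R) := by
      rw [← Real.exp_add]
      apply Real.exp_le_exp.2
      nlinarith [mul_nonneg hC.le (mul_nonneg (sub_nonneg.2 h2R) hR.le)]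
    have h4 := mul_le_mul_of_nonneg_right hexp hZpos.le
    have h5 := mul_le_mul_of_nonneg_left h4 (by positivity : (0:ℝ) ≤ (2:ℝ)^d)
    calc (2:ℝ)^d * (Real.exp (-(C*R^2/2)) * Z)
        ≤ (2:ℝ)^d * (Real.exp (2*C) * Real.exp (-C*R) * Z) := h5
      _ = (2:ℝ)^d * Real.exp (2*C) * Real.exp (-C*R) * Z := by ring
  · refine hNum_le_Z.trans ?_
    have h1 : (1:ℝ) ≤ (2:ℝ)^d := one_le_pow₀ (by norm_num)
    have h2 : (1:ℝ) ≤ Real.exp (2*C) * Real.exp (-C*R) := by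
      rw [← Real.exp_add, ← Real.exp_zero]
      apply Real.exp_le_exp.2
      nlinarith
    have h3 : (1:ℝ) ≤ (2:ℝ)^d * (Real.exp (2*C) * Real.exp (-C*R)) := by
      nlinarith
    have h4 := mul_le_mul_of_nonneg_right h3 hZpos.le
    nlinarith [h4]
end

section
/- Let a < b be real numbers, β > 0, K > 0, and let γ : [a,b] → [0,∞) be differentiable with γ(a) = 0, and suppose that γ'(t) ≤ −2β·γ(t) + 2K·√(γ(t)) for all t ∈ (a,b). Then γ(t) ≤ K²/β² for all t ∈ [a,b]. -/
open Real

/-- if `γ : [a,b] → [0,∞)` is differentiable with `γ(a) = 0` and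
`γ' ≤ −2βγ + 2K√γ` on `(a,b)`, then `γ ≤ K²/β²` on `[a,b]`. -/
theorem stmt_17 (a b β K : ℝ) (hab : a < b) (hβ : 0 < β) (hK : 0 < K)
    (γ γ' : ℝ → ℝ)
    (hnonneg : ∀ t ∈ Set.Icc a b, 0 ≤ γ t)
    (hderiv : ∀ t ∈ Set.Icc a b, HasDerivAt γ (γ' t) t)
    (ha : γ a = 0)
    (hineq : ∀ t ∈ Set.Ioo a b, γ' t ≤ -2 * β * γ t + 2 * K * Real.sqrt (γ t)) :
    ∀ t ∈ Set.Icc a b, γ t ≤ K ^ 2 / β ^ 2 := by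
  intro t ht
  by_contra hgt
  push_neg at hgt
  set M := K ^ 2 / β ^ 2 with hM
  have hM0 : 0 < M := by positivity
  have hcont : ContinuousOn γ (Set.Icc a b) := fun u hu =>
    ((hderiv u hu).continuousAt).continuousWithinAt
  have htt : Set.Icc a t ⊆ Set.Icc a b := Set.Icc_subset_Icc le_rfl ht.2
  set S := {u | u ∈ Set.Icc a t ∧ γ u ≤ M} with hS
  have haS : a ∈ S := ⟨⟨le_rfl, ht.1⟩, by rw [ha]; exact hM0.le⟩
  have hSne : S.Nonempty := ⟨a, haS⟩
  have hSbdd : BddAbove S := ⟨t, fun u hu => hu.1.2⟩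
  have hSclosed : IsClosed S := by
    have hrw : S = Set.Icc a t ∩ γ ⁻¹' Set.Iic M := rfl
    rw [hrw]
    exact (hcont.mono htt).preimage_isClosed_of_isClosed isClosed_Icc isClosed_Iic
  have hsmem : sSup S ∈ S :=
    (isCompact_Icc.of_isClosed_subset hSclosed fun u hu => hu.1).sSup_mem hSne
  set s := sSup S with hs
  have hst : s < t := by
    rcases lt_or_eq_of_le hsmem.1.2 with h | h
    · exact h
    · exact absurd (h ▸ hsmem.2) (not_le.mpr hgt)
  have hgtM : ∀ u ∈ Set.Ioc s t, M < γ u := by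
    intro u hu
    by_contra hle
    push_neg at hle
    have humem : u ∈ S := ⟨⟨le_trans hsmem.1.1 hu.1.le, hu.2⟩, hle⟩
    exact absurd (le_csSup hSbdd humem) (not_le.mpr hu.1)
  have hsub : Set.Icc s t ⊆ Set.Icc a b :=
    (Set.Icc_subset_Icc hsmem.1.1 le_rfl).trans htt
  have hanti : StrictAntiOn γ (Set.Icc s t) := by
    apply strictAntiOn_of_deriv_neg (convex_Icc s t) (hcont.mono hsub)
    intro u hu
    rw [interior_Icc] at hu
    have hu1 : u ∈ Set.Icc a b := hsub ⟨hu.1.le, hu.2.le⟩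
    have hu2 : u ∈ Set.Ioo a b :=
      ⟨lt_of_le_of_lt hsmem.1.1 hu.1, lt_of_lt_of_le hu.2 ht.2⟩
    rw [(hderiv u hu1).deriv]
    have hγu : M < γ u := hgtM u ⟨hu.1, hu.2.le⟩
    have hγu0 : 0 ≤ γ u := hnonneg u hu1
    have hr : K / β < Real.sqrt (γ u) := by
      rw [Real.lt_sqrt (by positivity : (0:ℝ) ≤ K / β)]
      · calc (K / β) ^ 2 = M := by rw [hM, div_pow]
          _ < γ u := hγu
    have hrsq : Real.sqrt (γ u) ^ 2 = γ u := Real.sq_sqrt hγu0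
    have hr0 : 0 < Real.sqrt (γ u) := lt_trans (by positivity) hr
    have hKr : K < β * Real.sqrt (γ u) := by
      rwa [div_lt_iff₀ hβ, mul_comm] at hr
    have := hineq u hu2
    nlinarith [mul_pos hr0 (sub_pos.mpr hKr)]
  have hlt : γ t < γ s := hanti ⟨le_rfl, hst.le⟩ ⟨hst.le, le_rfl⟩ hst
  exact absurd (lt_of_lt_of_le hlt hsmem.2) (not_lt.mpr hgt.le)
end
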